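/- arXiv:1407.7848 — 5 statements merged into one kernel-verified Lean document; each statement's English description precedes it below -/
import Mathlib

section
/- Every uniformly convex Banach space X has the approximate hyperplane property (AHP) with C = S_{X*} and Υ the identity: there is a function δ : (0,1) → (0,1) such that for every ε ∈ (0,1), whenever x* ∈ S_{X*} and x ∈ S_X satisfy Re x*(x) > 1 − δ(ε), the distance from x to the face F(x*) = {y ∈ S_X : Re x*(y) = 1} is less than ε (in particular F(x*) is nonempty). -/
open Filter Topology


lemma near_attain {X : Type*} [NormedAddCommGroup X] [NormedSpace ℂ X]
    (xstar : StrongDual ℂ X) (h : ‖xstar‖ = 1) {η : ℝ} (hη : 0 < η) (hη1 : η < 1) :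
    ∃ y : X, ‖y‖ = 1 ∧ 1 - η < (xstar y).re := by
  obtain ⟨z, hz1, hz2⟩ := xstar.exists_lt_apply_of_lt_opNorm
    (show 1 - η < ‖xstar‖ by rw [h]; linarith)
  set a := xstar z with ha
  have ha0 : a ≠ 0 := by
    intro h0
    rw [h0] at hz2
    simp at hz2
    linarith
  have hna : 0 < ‖a‖ := norm_pos_iff.2 ha0
  have hz0 : (0:ℝ) < ‖z‖ := by
    rw [norm_pos_iff]
    intro h0
    apply ha0
    rw [ha, h0, map_zero]
  set c : ℂ := (starRingEnd ℂ a) / ((‖a‖ : ℂ) * (‖z‖ : ℂ)) with hc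
  have hne : ((‖a‖ : ℂ) * (‖z‖ : ℂ)) ≠ 0 :=
    mul_ne_zero (by exact_mod_cast hna.ne') (by exact_mod_cast hz0.ne')
  have hcz : xstar (c • z) = ((‖a‖ / ‖z‖ : ℝ) : ℂ) := by
    rw [map_smul, smul_eq_mul, ← ha, hc]
    rw [div_mul_eq_mul_div, Complex.conj_mul']
    push_cast
    rw [div_eq_div_iff hne (by exact_mod_cast hz0.ne')]
    ring
  refine ⟨c • z, ?_, ?_⟩
  · have hcn : ‖c‖ = 1 / ‖z‖ := by
      rw [hc, norm_div, norm_mul, RCLike.norm_conj, Complex.norm_real, Complex.norm_real,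
        Real.norm_of_nonneg (norm_nonneg a), Real.norm_of_nonneg (norm_nonneg z)]
      field_simp
    rw [norm_smul, hcn]
    field_simp
  · rw [hcz]
    simp only [Complex.ofReal_re]
    have h1 : ‖a‖ ≤ ‖a‖ / ‖z‖ := by
      rw [le_div_iff₀ hz0]
      nlinarith [norm_nonneg a]
    linarith

lemma re_le_one {X : Type*} [NormedAddCommGroup X] [NormedSpace ℂ X]
    (xstar : StrongDual ℂ X) (h : ‖xstar‖ = 1) (y : X) (hy : ‖y‖ = 1) :
    (xstar y).re ≤ 1 := by
  calc (xstar y).re ≤ ‖xstar y‖ := Complex.re_le_norm _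
    _ ≤ ‖xstar‖ * ‖y‖ := xstar.le_opNorm y
    _ = 1 := by rw [h, hy, one_mul]

lemma attain {X : Type*} [NormedAddCommGroup X] [NormedSpace ℂ X] [CompleteSpace X]
    [UniformConvexSpace X] (xstar : StrongDual ℂ X) (h : ‖xstar‖ = 1) :
    ∃ y : X, ‖y‖ = 1 ∧ (xstar y).re = 1 := by
  have hex : ∀ n : ℕ, ∃ y : X, ‖y‖ = 1 ∧ 1 - 1 / (n + 2 : ℝ) < (xstar y).re := by
    intro n
    refine near_attain xstar h ?_ ?_
    · positivity
    · rw [div_lt_one (by positivity)]; linarith [Nat.cast_nonneg (α := ℝ) n]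
  choose u hu1 hu2 using hex
  have hcauchy : CauchySeq u := by
    rw [Metric.cauchySeq_iff]
    intro ε hε
    obtain ⟨d, hd, hdball⟩ := exists_forall_sphere_dist_add_le_two_sub X hε
    obtain ⟨N, hN⟩ := exists_nat_gt (2 / d)
    refine ⟨N, fun m hm n hn => ?_⟩
    have key : ∀ k : ℕ, N ≤ k → 1 - d / 2 < (xstar (u k)).re := by
      intro k hk
      have h1 : 1 / (k + 2 : ℝ) < d / 2 := by
        have hk2 : 2 / d < (k:ℝ) + 2 := by
          calc 2 / d < N := hN
            _ ≤ k := by exact_mod_cast hk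
            _ < (k:ℝ) + 2 := by linarith
        have h2 : 2 < ((k:ℝ) + 2) * d := (div_lt_iff₀ hd).1 hk2
        rw [div_lt_iff₀ (by positivity : (0:ℝ) < (k:ℝ) + 2)]
        nlinarith
      have := hu2 k
      linarith
    have hsum : 2 - d < ‖u m + u n‖ := by
      have h1 := key m hm
      have h2 := key n hn
      have : (xstar (u m + u n)).re ≤ ‖u m + u n‖ := by
        calc (xstar (u m + u n)).re ≤ ‖xstar (u m + u n)‖ := Complex.re_le_norm _
          _ ≤ ‖xstar‖ * ‖u m + u n‖ := xstar.le_opNorm _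
          _ = ‖u m + u n‖ := by rw [h, one_mul]
      rw [map_add, Complex.add_re] at this
      linarith
    rw [dist_eq_norm]
    by_contra hcon
    push_neg at hcon
    have := hdball (hu1 m) (hu1 n) hcon
    linarith
  obtain ⟨y, hy⟩ := cauchySeq_tendsto_of_complete hcauchy
  have hny : ‖y‖ = 1 := by
    have h1 : Tendsto (fun n => ‖u n‖) atTop (𝓝 ‖y‖) := (continuous_norm.tendsto y).comp hy
    have h2 : Tendsto (fun n : ℕ => (1:ℝ)) atTop (𝓝 ‖y‖) := by
      simpa [hu1] using h1
    exact tendsto_nhds_unique h2 tendsto_const_nhds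
  refine ⟨y, hny, ?_⟩
  have htd : Tendsto (fun n => (xstar (u n)).re) atTop (𝓝 (xstar y).re) :=
    (Complex.continuous_re.tendsto _).comp ((xstar.continuous.tendsto y).comp hy)
  have hle : (xstar y).re ≤ 1 :=
    le_of_tendsto htd (Filter.Eventually.of_forall fun n => re_le_one xstar h _ (hu1 n))
  have hlo : Tendsto (fun n : ℕ => 1 - 1 / ((n:ℝ) + 2)) atTop (𝓝 1) := by
    have h2 : Tendsto (fun n : ℕ => ((n:ℝ) + 2)) atTop atTop :=
      tendsto_atTop_add_const_right _ 2 tendsto_natCast_atTop_atTop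
    have h3 : Tendsto (fun n : ℕ => 1 / ((n:ℝ) + 2)) atTop (𝓝 0) := by
      simpa [one_div, Pi.inv_def] using h2.inv_tendsto_atTop
    simpa using tendsto_const_nhds.sub h3
  have hge : 1 ≤ (xstar y).re :=
    le_of_tendsto_of_tendsto' hlo htd fun n => (hu2 n).le
  linarith
theorem stmt7 {X : Type*} [NormedAddCommGroup X] [NormedSpace ℂ X] [CompleteSpace X]
    [UniformConvexSpace X] :
    ∃ δ : ℝ → ℝ, (∀ ε ∈ Set.Ioo (0 : ℝ) 1, δ ε ∈ Set.Ioo (0 : ℝ) 1) ∧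
      ∀ ε ∈ Set.Ioo (0 : ℝ) 1, ∀ xstar : StrongDual ℂ X, ‖xstar‖ = 1 →
        ∀ x : X, ‖x‖ = 1 → 1 - δ ε < (xstar x).re →
          ({y : X | ‖y‖ = 1 ∧ (xstar y).re = 1}).Nonempty ∧
            Metric.infDist x {y : X | ‖y‖ = 1 ∧ (xstar y).re = 1} < ε := by
  have huc : ∀ ε : ℝ, ∃ d : ℝ, 0 < ε → (0 < d ∧
      ∀ x y : X, ‖x‖ = 1 → ‖y‖ = 1 → 2 - d < ‖x + y‖ → ‖x - y‖ < ε) := by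
    intro ε
    by_cases hε : 0 < ε
    · obtain ⟨d, hd, hball⟩ := exists_forall_sphere_dist_add_le_two_sub X hε
      refine ⟨d, fun _ => ⟨hd, fun x y hx hy hsum => ?_⟩⟩
      by_contra hcon
      push_neg at hcon
      have := hball hx hy hcon
      linarith
    · exact ⟨1, fun h => absurd h hε⟩
  choose d hd using huc
  refine ⟨fun ε => min (d ε / 2) (1 / 2), ?_, ?_⟩
  · intro ε hε
    have hdε := hd ε hε.1
    constructor
    · exact lt_min (by linarith [hdε.1]) (by norm_num)
    · exact lt_of_le_of_lt (min_le_right _ _) (by norm_num)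
  · intro ε hε xstar hxs x hx hre
    obtain ⟨hd1, hd2⟩ := hd ε hε.1
    obtain ⟨y, hy1, hy2⟩ := attain xstar hxs
    have hymem : y ∈ {y : X | ‖y‖ = 1 ∧ (xstar y).re = 1} := ⟨hy1, hy2⟩
    have hδle : min (d ε / 2) (1 / 2) ≤ d ε / 2 := min_le_left _ _
    have hδpos : 0 < min (d ε / 2) (1 / 2) := lt_min (by linarith) (by norm_num)
    have hrey : 1 - min (d ε / 2) (1 / 2) < (xstar y).re := by rw [hy2]; linarith
    have hsum : 2 - d ε < ‖x + y‖ := by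
      have h1 : (xstar (x + y)).re ≤ ‖x + y‖ := by
        calc (xstar (x + y)).re ≤ ‖xstar (x + y)‖ := Complex.re_le_norm _
          _ ≤ ‖xstar‖ * ‖x + y‖ := xstar.le_opNorm _
          _ = ‖x + y‖ := by rw [hxs, one_mul]
      rw [map_add, Complex.add_re] at h1
      linarith
    have hdist : ‖x - y‖ < ε := hd2 x y hx hy1 hsum
    refine ⟨⟨y, hymem⟩, lt_of_le_of_lt (Metric.infDist_le_dist_of_mem hymem) ?_⟩
    rw [dist_eq_norm]
    exact hdist
end

section
/- Every finite-dimensional normed space X has the AHP: there is δ : (0,1) → (0,1) and for each ε ∈ (0,1) a map Υ : S_{X*} → S_{X*} such that whenever x* ∈ S_{X*} and x ∈ S_X satisfy Re x*(x) > 1 − δ(ε), then dist(x, F(Υ(x*))) < ε, where F(y*) = {z ∈ S_X : Re y*(z) = 1}. -/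
open Metric NormedSpace

/-- Per-functional version: for each norm-one functional, points of the sphere where the
functional is close enough to 1 are close to the face of that functional. -/
lemma aux_step1 {X : Type*} [NormedAddCommGroup X] [NormedSpace ℂ X]
    [FiniteDimensional ℂ X] (ε : ℝ) (hε : 0 < ε) (f : StrongDual ℂ X) (hf : ‖f‖ = 1) :
    ∃ d > 0, ∀ x : X, ‖x‖ = 1 → 1 - d < (f x).re →
      Metric.infDist x {z : X | ‖z‖ = 1 ∧ (f z).re = 1} < ε := by
  by_contra hcon
  push_neg at hcon
  set F := {z : X | ‖z‖ = 1 ∧ (f z).re = 1} with hF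
  set A : ℕ → Set X := fun n =>
    {x : X | ‖x‖ = 1 ∧ 1 - 1 / (n + 1) ≤ (f x).re ∧ ε ≤ Metric.infDist x F} with hA
  have hAsub : ∀ n, A (n + 1) ⊆ A n := by
    intro n x hx
    refine ⟨hx.1, le_trans ?_ hx.2.1, hx.2.2⟩
    have h1 : (1 : ℝ) / (n + 1 + 1) ≤ 1 / (n + 1) := by
      apply one_div_le_one_div_of_le <;> [linarith; push_cast <;> linarith]
    push_cast
    linarith
  have hAne : ∀ n, (A n).Nonempty := by
    intro n
    obtain ⟨x, h1, h2, h3⟩ := hcon (1 / (n + 1)) (by positivity)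
    exact ⟨x, h1, le_of_lt h2, h3⟩
  have hAcl : ∀ n, IsClosed (A n) := by
    intro n
    exact (isClosed_eq continuous_norm continuous_const).inter
      ((isClosed_le continuous_const (Complex.continuous_re.comp f.continuous)).inter
        (isClosed_le continuous_const (continuous_infDist_pt F)))
  have hAc : IsCompact (A 0) := by
    refine (isCompact_sphere (0 : X) 1).of_isClosed_subset (hAcl 0) ?_
    intro x hx
    simpa [mem_sphere_zero_iff_norm] using hx.1
  obtain ⟨x, hx⟩ :=
    IsCompact.nonempty_iInter_of_sequence_nonempty_isCompact_isClosed A hAsub hAne hAc hAcl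
  simp only [Set.mem_iInter] at hx
  have hx0 := hx 0
  have hre : 1 ≤ (f x).re := by
    by_contra h
    push_neg at h
    obtain ⟨n, hn⟩ := exists_nat_one_div_lt (show (0:ℝ) < 1 - (f x).re by linarith)
    have h2 := (hx n).2.1
    linarith
  have hre' : (f x).re ≤ 1 := by
    have h1 : (f x).re ≤ ‖f x‖ := by
      exact Complex.re_le_norm (f x)
    have h2 : ‖f x‖ ≤ ‖f‖ * ‖x‖ := f.le_opNorm x
    rw [hf, hx0.1, one_mul] at h2
    linarith
  have hmem : x ∈ F := ⟨hx0.1, le_antisymm hre' hre⟩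
  have hzero : Metric.infDist x F = 0 := Metric.infDist_zero_of_mem hmem
  have := hx0.2.2
  linarith

theorem stmt8 {X : Type*} [NormedAddCommGroup X] [NormedSpace ℂ X]
    [FiniteDimensional ℂ X] :
    ∃ δ : ℝ → ℝ, (∀ ε ∈ Set.Ioo (0 : ℝ) 1, δ ε ∈ Set.Ioo (0 : ℝ) 1) ∧
      ∀ ε ∈ Set.Ioo (0 : ℝ) 1,
        ∃ Υ : StrongDual ℂ X → StrongDual ℂ X,
          (∀ xstar : StrongDual ℂ X, ‖xstar‖ = 1 → ‖Υ xstar‖ = 1) ∧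
          ∀ xstar : StrongDual ℂ X, ‖xstar‖ = 1 →
            ∀ x : X, ‖x‖ = 1 → 1 - δ ε < (xstar x).re →
              Metric.infDist x {z : X | ‖z‖ = 1 ∧ ((Υ xstar) z).re = 1} < ε := by
  have key : ∀ ε : ℝ, ∃ d : ℝ, ε ∈ Set.Ioo (0 : ℝ) 1 →
      d ∈ Set.Ioo (0 : ℝ) 1 ∧
      ∃ Υ : StrongDual ℂ X → StrongDual ℂ X,
        (∀ xstar : StrongDual ℂ X, ‖xstar‖ = 1 → ‖Υ xstar‖ = 1) ∧
        ∀ xstar : StrongDual ℂ X, ‖xstar‖ = 1 →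
          ∀ x : X, ‖x‖ = 1 → 1 - d < (xstar x).re →
            Metric.infDist x {z : X | ‖z‖ = 1 ∧ ((Υ xstar) z).re = 1} < ε := by
    intro ε
    by_cases hε : ε ∈ Set.Ioo (0 : ℝ) 1
    swap
    · exact ⟨1 / 2, fun h => absurd h hε⟩
    obtain ⟨hε0, hε1⟩ := hε
    by_cases hsph : ∃ f : StrongDual ℂ X, ‖f‖ = 1
    swap
    · refine ⟨ε / 2, fun _ => ⟨⟨by linarith, by linarith⟩, id, ?_, ?_⟩⟩
      · intro f hf; exact absurd ⟨f, hf⟩ hsph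
      · intro f hf; exact absurd ⟨f, hf⟩ hsph
    have hd : ∀ f : StrongDual ℂ X, ∃ m : ℝ, 0 < m ∧
        (‖f‖ = 1 → ∀ x : X, ‖x‖ = 1 → 1 - m < (f x).re →
          Metric.infDist x {z : X | ‖z‖ = 1 ∧ (f z).re = 1} < ε) := by
      intro f
      by_cases hf : ‖f‖ = 1
      · obtain ⟨m, hm, hprop⟩ := aux_step1 ε hε0 f hf
        exact ⟨m, hm, fun _ => hprop⟩
      · exact ⟨1, one_pos, fun h => absurd h hf⟩
    choose d hd0 hdp using hd
    have hcomp : IsCompact (sphere (0 : StrongDual ℂ X) 1) := isCompact_sphere _ _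
    have hcover : sphere (0 : StrongDual ℂ X) 1 ⊆
        ⋃ f ∈ sphere (0 : StrongDual ℂ X) 1, ball f (d f / 2) := by
      intro f hf
      exact Set.mem_biUnion hf (mem_ball_self (by have := hd0 f; positivity))
    obtain ⟨T, hTsub, hTfin, hTcov⟩ := hcomp.elim_finite_subcover_image
      (fun f _ => isOpen_ball) hcover
    have hTne : T.Nonempty := by
      obtain ⟨f, hf⟩ := hsph
      have hmem : f ∈ ⋃ g ∈ T, ball g (d g / 2) :=
        hTcov (by simpa [mem_sphere_zero_iff_norm] using hf)
      obtain ⟨g, hg, -⟩ := Set.mem_iUnion₂.mp hmem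
      exact ⟨g, hg⟩
    obtain ⟨m, hm0, hmle⟩ : ∃ m > 0, ∀ f ∈ T, m ≤ d f / 2 := by
      obtain ⟨g, hgT, hgmin⟩ := Set.exists_min_image T (fun f => d f / 2) hTfin hTne
      refine ⟨d g / 2, by have := hd0 g; positivity, fun f hf => hgmin f hf⟩
    set δ := min (ε / 2) m with hδ
    have hδ0 : 0 < δ := lt_min (by linarith) hm0
    have hδ1 : δ < 1 := lt_of_le_of_lt (min_le_left _ _) (by linarith)
    have hY : ∀ y : StrongDual ℂ X, ∃ t : StrongDual ℂ X,
        ‖y‖ = 1 → t ∈ T ∧ ‖t‖ = 1 ∧ ‖y - t‖ < d t / 2 := by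
      intro y
      by_cases hy : ‖y‖ = 1
      · have hmem : y ∈ ⋃ g ∈ T, ball g (d g / 2) :=
          hTcov (by simpa [mem_sphere_zero_iff_norm] using hy)
        obtain ⟨g, hgT, hgball⟩ := Set.mem_iUnion₂.mp hmem
        refine ⟨g, fun _ => ⟨hgT, ?_, ?_⟩⟩
        · simpa [mem_sphere_zero_iff_norm] using hTsub hgT
        · simpa [mem_ball, dist_eq_norm] using hgball
      · exact ⟨y, fun h => absurd h hy⟩
    choose Υ hΥ using hY
    refine ⟨δ, fun _ => ⟨⟨hδ0, hδ1⟩, Υ, fun f hf => (hΥ f hf).2.1, ?_⟩⟩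
    intro f hf x hx hre
    obtain ⟨htT, ht1, htb⟩ := hΥ f hf
    have h1 : ((f - Υ f) x).re ≤ ‖f - Υ f‖ := by
      have a1 : ((f - Υ f) x).re ≤ ‖(f - Υ f) x‖ := by
        exact Complex.re_le_norm ((f - Υ f) x)
      have a2 : ‖(f - Υ f) x‖ ≤ ‖f - Υ f‖ * ‖x‖ := (f - Υ f).le_opNorm x
      rw [hx, mul_one] at a2
      linarith
    have h2 : ((Υ f) x).re = (f x).re - ((f - Υ f) x).re := by
      simp [ContinuousLinearMap.sub_apply, Complex.sub_re]
    have hδm : δ ≤ d (Υ f) / 2 := le_trans (min_le_right _ _) (hmle _ htT)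
    have h3 : 1 - d (Υ f) < ((Υ f) x).re := by
      rw [h2]
      linarith
    exact hdp (Υ f) ht1 x hx h3
  choose δf hδf using key
  exact ⟨δf, fun ε hε => (hδf ε hε).1, fun ε hε => (hδf ε hε).2⟩
end

section
/- If a Banach space X has property β (with some constant ρ ∈ [0,1)), then X has the AHP, with C = {xᵢ* : i ∈ I} and Υ the identity, and the function δ depending only on ρ. -/
set_option maxHeartbeats 1000000

theorem stmt10 (ρ : ℝ) (hρ0 : 0 ≤ ρ) (hρ1 : ρ < 1) :
    ∃ δ : ℝ → ℝ, (∀ ε ∈ Set.Ioo (0 : ℝ) 1, δ ε ∈ Set.Ioo (0 : ℝ) 1) ∧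
      ∀ (X : Type) [NormedAddCommGroup X] [NormedSpace ℂ X] [CompleteSpace X]
        (I : Type) (x : I → X) (xs : I → StrongDual ℂ X),
        (∀ i, ‖x i‖ = 1) → (∀ i, ‖xs i‖ = 1) →
        (∀ i, xs i (x i) = 1) →
        (∀ i j, i ≠ j → ‖xs i (x j)‖ ≤ ρ) →
        (∀ v : X, ‖v‖ = ⨆ i, ‖xs i v‖) →
        -- AHP with `C = {xᵢ* : i ∈ I}` and `Υ` the identity
        ∀ ε ∈ Set.Ioo (0 : ℝ) 1, ∀ (i : I) (v : X), ‖v‖ = 1 → 1 - δ ε < (xs i v).re →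
          Metric.infDist v {w : X | ‖w‖ = 1 ∧ (xs i w).re = 1} < ε := by
  have h1ρ : (0:ℝ) < 1 - ρ := by linarith
  have h1ρ' : (0:ℝ) < 1 + ρ := by linarith
  refine ⟨fun ε => (1-ρ)^2/(1+ρ)^2 * ε^2/8, ?_, ?_⟩
  · rintro ε ⟨hε0, hε1⟩
    constructor
    · positivity
    · have h2 : (1-ρ)^2 ≤ (1+ρ)^2 := by nlinarith
      have h3 : (1-ρ)^2/(1+ρ)^2 ≤ 1 := by
        rw [div_le_one (by positivity)]; exact h2
      nlinarith [sq_nonneg ε, sq_nonneg (1-ρ), sq_nonneg (1+ρ)]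
  · intro X _ _ _ I x xs hx hxs hone hβ hsup ε ⟨hε0, hε1⟩ i v hv hre
    obtain ⟨δ, hδdef⟩ : ∃ d : ℝ, d = (1-ρ)^2/(1+ρ)^2 * ε^2/8 := ⟨_, rfl⟩
    replace hre : 1 - δ < (xs i v).re := by rw [hδdef]; exact hre
    obtain ⟨s, hsdef⟩ : ∃ t : ℝ, t = (1-ρ)*ε/(2*(1+ρ)) := ⟨_, rfl⟩
    have hs0 : 0 < s := by rw [hsdef]; positivity
    have hs2 : s^2 = 2*δ := by rw [hsdef, hδdef]; field_simp; ring
    obtain ⟨c, hcdef⟩ : ∃ c : ℝ, c = ρ*s/(1-ρ) := ⟨_, rfl⟩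
    have hc0 : 0 ≤ c := by rw [hcdef]; positivity
    obtain ⟨a, hadef⟩ : ∃ a : ℂ, a = 1 - xs i v := ⟨_, rfl⟩
    -- ‖a‖ ≤ s
    have hvnorm1 : ‖xs i v‖ ≤ 1 := by
      have := (xs i).le_opNorm v
      rwa [hxs i, hv, one_mul] at this
    have hare : (xs i v).re ≤ 1 := by
      have := (Complex.re_le_norm (xs i v))
      calc (xs i v).re ≤ ‖xs i v‖ := this
        _ = ‖xs i v‖ := rfl
        _ ≤ 1 := hvnorm1
    have hanorm : ‖a‖ ≤ s := by
      have h1 : ‖a‖^2 ≤ 2*(1 - (xs i v).re) := by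
        have hnsq : ‖a‖^2 = (1 - (xs i v).re)^2 + ((xs i v).im)^2 := by
          rw [hadef]
          rw [Complex.sq_norm, Complex.normSq_apply]
          simp only [Complex.sub_re, Complex.sub_im, Complex.one_re, Complex.one_im]
          ring
        have h2 : (xs i v).re^2 + (xs i v).im^2 ≤ 1 := by
          have : ‖xs i v‖ ≤ 1 := hvnorm1
          have := Complex.sq_norm (xs i v)
          nlinarith [Complex.normSq_apply (xs i v), norm_nonneg (xs i v)]
        nlinarith
      have h3 : ‖a‖^2 ≤ s^2 := by
        rw [hs2]; nlinarith
      nlinarith [norm_nonneg a, hs0]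
    -- define z
    have h1c : (0:ℝ) < 1 + c := by linarith
    have h1cC : (1 + (c:ℂ)) ≠ 0 := by
      have e : (1 + (c:ℂ)) = ((1+c : ℝ) : ℂ) := by push_cast; ring
      rw [e]
      exact_mod_cast ne_of_gt h1c
    obtain ⟨z, hzdef⟩ : ∃ z : X, z = (1 + (c:ℂ))⁻¹ • (v + (a + (c:ℂ)) • x i) := ⟨_, rfl⟩
    -- xs j z formula
    have hform : ∀ j, xs j z = (1 + (c:ℂ))⁻¹ * (xs j v + (a + c) * xs j (x i)) := by
      intro j
      rw [hzdef]
      simp only [map_smul, map_add, smul_eq_mul]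
      try ring
    have hxiz : xs i z = 1 := by
      rw [hform i, hone i, hadef]
      rw [show (xs i) v + (1 - xs i v + (c:ℂ)) * 1 = 1 + (c:ℂ) by ring,
        inv_mul_cancel₀ h1cC]
    -- each coordinate ≤ 1
    have hbound : ∀ j, ‖xs j z‖ ≤ 1 := by
      intro j
      rcases eq_or_ne j i with rfl | hji
      · rw [hxiz]; simp
      · rw [hform j]
        have hβ' : ‖xs j (x i)‖ ≤ ρ := hβ j i hji
        have hv1 : ‖xs j v‖ ≤ 1 := by
          have := (xs j).le_opNorm v
          rwa [hxs j, hv, one_mul] at this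
        have hac : ‖(a + (c:ℂ))‖ ≤ s + c := by
          calc ‖a + (c:ℂ)‖ ≤ ‖a‖ + ‖(c:ℂ)‖ := norm_add_le _ _
            _ ≤ s + c := by
                have : ‖(c:ℂ)‖ = c := by
                  rw [Complex.norm_real, Real.norm_eq_abs, abs_of_nonneg hc0]
                rw [this]; linarith
        have hinv : ‖(1 + (c:ℂ))⁻¹‖ = (1+c)⁻¹ := by
          rw [norm_inv]
          congr 1
          have : (1 + (c:ℂ)) = ((1+c : ℝ) : ℂ) := by push_cast; ring
          rw [this, Complex.norm_real, Real.norm_eq_abs, abs_of_pos h1c]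
        rw [norm_mul, hinv]
        have hnum : ‖xs j v + (a + (c:ℂ)) * xs j (x i)‖ ≤ 1 + (s+c)*ρ := by
          calc ‖xs j v + (a + (c:ℂ)) * xs j (x i)‖
              ≤ ‖xs j v‖ + ‖(a + (c:ℂ))‖ * ‖xs j (x i)‖ := by
                refine (norm_add_le _ _).trans ?_
                rw [norm_mul]
            _ ≤ 1 + (s+c)*ρ := by
                have : ‖(a + (c:ℂ))‖ * ‖xs j (x i)‖ ≤ (s+c)*ρ :=
                  mul_le_mul hac hβ' (norm_nonneg _) (by linarith [hs0])
                linarith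
        have hkey : 1 + (s+c)*ρ ≤ 1 + c := by
          have : c*(1-ρ) = ρ*s := by
            rw [hcdef]
            field_simp
          nlinarith
        calc (1+c)⁻¹ * ‖xs j v + (a + (c:ℂ)) * xs j (x i)‖
            ≤ (1+c)⁻¹ * (1+c) := by
              apply mul_le_mul_of_nonneg_left (hnum.trans hkey) (by positivity)
          _ = 1 := by field_simp
    -- ‖z‖ = 1
    have hznorm : ‖z‖ = 1 := by
      rw [hsup z]
      have : Nonempty I := ⟨i⟩
      apply le_antisymm
      · exact ciSup_le hbound
      · have : ‖xs i z‖ ≤ ⨆ j, ‖xs j z‖ :=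
          le_ciSup (f := fun j => ‖xs j z‖) ⟨1, by rintro _ ⟨j, rfl⟩; exact hbound j⟩ i
        rw [hxiz] at this
        simpa using this
    have hzmem : z ∈ {w : X | ‖w‖ = 1 ∧ (xs i w).re = 1} := by
      refine ⟨hznorm, ?_⟩
      rw [hxiz]; simp
    -- distance bound
    have hdist : ‖v - z‖ ≤ 2*c + s := by
      have hvz : v - z = (1 + (c:ℂ))⁻¹ • ((c:ℂ) • v - (a + (c:ℂ)) • x i) := by
        have h1 : v = (1 + (c:ℂ))⁻¹ • ((1 + (c:ℂ)) • v) := by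
          rw [smul_smul, inv_mul_cancel₀ h1cC, one_smul]
        rw [hzdef]
        nth_rewrite 1 [h1]
        rw [← smul_sub]
        congr 1
        module
      rw [hvz]
      have hinv : ‖(1 + (c:ℂ))⁻¹‖ = (1+c)⁻¹ := by
        rw [norm_inv]
        congr 1
        have : (1 + (c:ℂ)) = ((1+c : ℝ) : ℂ) := by push_cast; ring
        rw [this, Complex.norm_real, Real.norm_eq_abs, abs_of_pos h1c]
      rw [norm_smul, hinv]
      have hcC : ‖(c:ℂ)‖ = c := by
        rw [Complex.norm_real, Real.norm_eq_abs, abs_of_nonneg hc0]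
      have h2 : ‖(c:ℂ) • v - (a + c) • x i‖ ≤ c + (s + c) := by
        calc ‖(c:ℂ) • v - (a + c) • x i‖ ≤ ‖(c:ℂ) • v‖ + ‖(a + (c:ℂ)) • x i‖ := norm_sub_le _ _
          _ = c * ‖v‖ + ‖a + (c:ℂ)‖ * ‖x i‖ := by rw [norm_smul, norm_smul, hcC]
          _ ≤ c + (s + c) := by
              rw [hv, hx i, mul_one, mul_one]
              have : ‖a + (c:ℂ)‖ ≤ s + c := by
                calc ‖a + (c:ℂ)‖ ≤ ‖a‖ + ‖(c:ℂ)‖ := norm_add_le _ _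
                  _ ≤ s + c := by rw [hcC]; linarith
              linarith
      calc (1+c)⁻¹ * ‖(c:ℂ) • v - (a + c) • x i‖ ≤ (1+c)⁻¹ * (c + (s+c)) :=
            mul_le_mul_of_nonneg_left h2 (by positivity)
        _ ≤ 2*c + s := by
            rw [inv_mul_le_iff₀ h1c]
            nlinarith
    have hfinal : 2*c + s < ε := by
      have he : 2*c + s = ε/2 := by
        rw [hcdef, hsdef]
        field_simp
        ring
      rw [he]
      linarith
    calc Metric.infDist v {w : X | ‖w‖ = 1 ∧ (xs i w).re = 1}
        ≤ dist v z := Metric.infDist_le_dist_of_mem hzmem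
      _ = ‖v - z‖ := dist_eq_norm v z
      _ ≤ 2*c + s := hdist
      _ < ε := hfinal
end

section
/- Let Y be a Banach space such that B_Y is the closed absolutely convex hull of F(y*) for every y* in some rounded norming set C ⊆ S_{Y*} (e.g. Y an almost-CL-space). Then Y has the AHP with the identity map Υ and a function δ independent of Y. Concretely: for every ε ∈ (0,1) there is δ(ε) ∈ (0,1), independent of Y, such that if y* ∈ C and y ∈ S_Y satisfy Re y*(y) > 1 − δ(ε), then dist(y, F(y*)) < ε. -/
open Pointwise

private lemma sqrt_concave_aux {a b A B : ℝ} (ha : 0 ≤ a) (hb : 0 ≤ b) (hab : a + b = 1)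
    (hA : 0 ≤ A) (hB : 0 ≤ B) :
    a * Real.sqrt A + b * Real.sqrt B ≤ Real.sqrt (a * A + b * B) := by
  rw [show a * A + b * B = ((a * A + b * B)) from rfl]
  apply Real.le_sqrt_of_sq_le
  have hb' : b = 1 - a := by linarith
  subst hb'
  nlinarith [mul_nonneg (mul_nonneg ha hb) (sq_nonneg (Real.sqrt A - Real.sqrt B)),
    Real.sq_sqrt hA, Real.sq_sqrt hB, Real.sqrt_nonneg A, Real.sqrt_nonneg B]

/-- The absolutely convex sets as in the older Mathlib: balanced over `𝕜`, convex over `ℝ`. -/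
def AbsConvexOld (𝕜 : Type*) {E : Type*} [SeminormedRing 𝕜] [SMul 𝕜 E] [SMul ℝ E]
    [AddCommMonoid E] (s : Set E) : Prop :=
  Balanced 𝕜 s ∧ Convex ℝ s

/-- The absolutely convex hull as in the older Mathlib. -/
def absConvexHullOld (𝕜 : Type*) {E : Type*} [SeminormedRing 𝕜] [SMul 𝕜 E] [SMul ℝ E]
    [AddCommMonoid E] (s : Set E) : Set E :=
  ⋂₀ {t | s ⊆ t ∧ AbsConvexOld 𝕜 t}

private lemma balanced_convexHull_real {Y : Type*} [NormedAddCommGroup Y] [NormedSpace ℂ Y]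
    {s : Set Y} (hs : Balanced ℂ s) : Balanced ℂ (convexHull ℝ s) := by
  suffices Convex ℝ { x | ∀ a : ℂ, ‖a‖ ≤ 1 → a • x ∈ convexHull ℝ s } by
    rw [balanced_iff_smul_mem] at hs ⊢
    refine fun a ha x hx => convexHull_min ?_ this hx a ha
    exact fun y hy a ha => subset_convexHull ℝ s (hs ha hy)
  intro x hx y hy u v hu hv huv a ha
  rw [smul_add, ← smul_comm u, ← smul_comm v]
  exact convex_convexHull ℝ s (hx a ha) (hy a ha) hu hv huv

private lemma absConvexHullOld_empty' {Y : Type*} [NormedAddCommGroup Y] [NormedSpace ℂ Y] :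
    absConvexHullOld ℂ (∅ : Set Y) = ∅ :=
  Set.subset_empty_iff.mp (Set.sInter_subset_of_mem ⟨subset_rfl, balanced_empty, convex_empty⟩)

private lemma absConvexHullOld_subset' {Y : Type*} [NormedAddCommGroup Y] [NormedSpace ℂ Y]
    (s : Set Y) : absConvexHullOld ℂ s ⊆ convexHull ℝ (balancedHull ℂ s) :=
  Set.sInter_subset_of_mem
    ⟨(subset_balancedHull ℂ).trans (subset_convexHull ℝ _),
      balanced_convexHull_real (balancedHull.balanced s), convex_convexHull ℝ _⟩

theorem stmt11 :
    ∃ δ : ℝ → ℝ, (∀ ε ∈ Set.Ioo (0 : ℝ) 1, δ ε ∈ Set.Ioo (0 : ℝ) 1) ∧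
      ∀ (Y : Type) [NormedAddCommGroup Y] [NormedSpace ℂ Y] [CompleteSpace Y]
        (C : Set (StrongDual ℂ Y)),
        (∀ f ∈ C, ‖f‖ = 1) →
        -- `C` is rounded
        (∀ θ : ℂ, ‖θ‖ = 1 → θ • C = C) →
        -- `C` is norming
        (∀ y : Y, ‖y‖ = ⨆ f : C, ‖(f : StrongDual ℂ Y) y‖) →
        -- the unit ball is the closed absolutely convex hull of each face `F(f)`, `f ∈ C`
        (∀ f ∈ C, Metric.closedBall (0 : Y) 1 =
          closure (absConvexHullOld ℂ {y : Y | ‖y‖ = 1 ∧ (f y).re = 1})) →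
        ∀ ε ∈ Set.Ioo (0 : ℝ) 1, ∀ f ∈ C, ∀ y : Y, ‖y‖ = 1 → 1 - δ ε < (f y).re →
          Metric.infDist y {w : Y | ‖w‖ = 1 ∧ (f w).re = 1} < ε := by
  refine ⟨fun ε => ε ^ 2 / 8, ?_, ?_⟩
  · rintro ε ⟨h0, h1⟩
    constructor
    · positivity
    · nlinarith
  rintro Y _ _ _ C hC hround hnorm hball ε ⟨hε0, hε1⟩ f hf y hy hfy
  set F : Set Y := {w : Y | ‖w‖ = 1 ∧ (f w).re = 1} with hF
  have hfnorm : ‖f‖ = 1 := hC f hf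
  -- `f` bound on any point
  have hfle : ∀ z : Y, ‖f z‖ ≤ ‖z‖ := by
    intro z
    calc ‖f z‖ ≤ ‖f‖ * ‖z‖ := f.le_opNorm z
    _ = ‖z‖ := by rw [hfnorm, one_mul]
  -- `f x = 1` on `F`
  have hFval : ∀ x ∈ F, f x = 1 := by
    rintro x ⟨hx1, hx2⟩
    have h1 : ‖f x‖ ≤ 1 := by simpa [hx1] using hfle x
    have h2 : ‖f x‖ ^ 2 = (f x).re ^ 2 + (f x).im ^ 2 := by
      rw [Complex.sq_norm, Complex.normSq_apply]; ring
    have him : (f x).im = 0 := by nlinarith [norm_nonneg (f x)]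
    exact Complex.ext (by simpa using hx2) (by simpa using him)
  -- `F` is convex
  have hFconv : Convex ℝ F := by
    rintro x ⟨hx1, hx2⟩ z ⟨hz1, hz2⟩ a b ha hb hab
    have hval : f (a • x + b • z) = 1 := by
      rw [map_add, f.map_smul_of_tower, f.map_smul_of_tower, hFval x ⟨hx1, hx2⟩,
        hFval z ⟨hz1, hz2⟩]
      simp only [Complex.real_smul, mul_one]
      exact_mod_cast hab
    have hle : ‖a • x + b • z‖ ≤ 1 := by
      calc ‖a • x + b • z‖ ≤ ‖a • x‖ + ‖b • z‖ := norm_add_le _ _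
      _ = a * 1 + b * 1 := by rw [norm_smul, norm_smul, hx1, hz1,
            Real.norm_of_nonneg ha, Real.norm_of_nonneg hb]
      _ = 1 := by linarith
    have hge : (1 : ℝ) ≤ ‖a • x + b • z‖ := by
      have := hfle (a • x + b • z)
      rw [hval] at this
      simpa using this
    exact ⟨le_antisymm hle hge, by rw [hval]; simp⟩
  -- `F` is nonempty
  have hymem : y ∈ Metric.closedBall (0 : Y) 1 := by
    simp [Metric.mem_closedBall, dist_eq_norm, hy]
  have hFne : F.Nonempty := by
    by_contra hne
    rw [Set.not_nonempty_iff_eq_empty] at hne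
    have := hball f hf
    rw [← hF, hne, absConvexHullOld_empty', closure_empty] at this
    rw [this] at hymem
    exact hymem
  -- the comparison set
  set S : Set Y := {z : Y | ‖z‖ ≤ 1 ∧
      Metric.infDist z F ≤ Real.sqrt (2 * (1 - (f z).re))} with hS
  -- `S` is convex
  have hSre : ∀ z ∈ S, (f z).re ≤ 1 := by
    rintro z ⟨hz1, _⟩
    calc (f z).re ≤ ‖f z‖ := Complex.re_le_norm _
    _ ≤ 1 := le_trans (hfle z) hz1
  have hSconv : Convex ℝ S := by
    rintro z₁ hz₁ z₂ hz₂ a b ha hb hab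
    obtain ⟨h11, h12⟩ := hz₁
    obtain ⟨h21, h22⟩ := hz₂
    constructor
    · calc ‖a • z₁ + b • z₂‖ ≤ ‖a • z₁‖ + ‖b • z₂‖ := norm_add_le _ _
      _ ≤ a * 1 + b * 1 := by
          rw [norm_smul, norm_smul, Real.norm_of_nonneg ha, Real.norm_of_nonneg hb]
          gcongr
      _ = 1 := by linarith
    · -- infDist convexity
      have hstep : Metric.infDist (a • z₁ + b • z₂) F ≤
          a * Metric.infDist z₁ F + b * Metric.infDist z₂ F := by
        refine le_of_forall_pos_le_add ?_
        intro η hη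
        obtain ⟨w₁, hw₁, hd₁⟩ := (Metric.infDist_lt_iff hFne).mp
          (show Metric.infDist z₁ F < Metric.infDist z₁ F + η / 2 by linarith)
        obtain ⟨w₂, hw₂, hd₂⟩ := (Metric.infDist_lt_iff hFne).mp
          (show Metric.infDist z₂ F < Metric.infDist z₂ F + η / 2 by linarith)
        have hwm : a • w₁ + b • w₂ ∈ F := hFconv hw₁ hw₂ ha hb hab
        have : Metric.infDist (a • z₁ + b • z₂) F ≤ dist (a • z₁ + b • z₂) (a • w₁ + b • w₂) :=
          Metric.infDist_le_dist_of_mem hwm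
        have hdist : dist (a • z₁ + b • z₂) (a • w₁ + b • w₂) ≤
            a * dist z₁ w₁ + b * dist z₂ w₂ := by
          rw [dist_eq_norm, dist_eq_norm, dist_eq_norm]
          calc ‖a • z₁ + b • z₂ - (a • w₁ + b • w₂)‖
              = ‖a • (z₁ - w₁) + b • (z₂ - w₂)‖ := by
                congr 1
                module
            _ ≤ ‖a • (z₁ - w₁)‖ + ‖b • (z₂ - w₂)‖ := norm_add_le _ _
            _ = a * ‖z₁ - w₁‖ + b * ‖z₂ - w₂‖ := by
                rw [norm_smul, norm_smul, Real.norm_of_nonneg ha, Real.norm_of_nonneg hb]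
        nlinarith [Metric.infDist_nonneg (x := z₁) (s := F),
          Metric.infDist_nonneg (x := z₂) (s := F)]
      have hcc : a * Real.sqrt (2 * (1 - (f z₁).re)) + b * Real.sqrt (2 * (1 - (f z₂).re)) ≤
          Real.sqrt (a * (2 * (1 - (f z₁).re)) + b * (2 * (1 - (f z₂).re))) :=
        sqrt_concave_aux ha hb hab
          (by have := hSre z₁ ⟨h11, h12⟩; linarith)
          (by have := hSre z₂ ⟨h21, h22⟩; linarith)
      have hlin : f (a • z₁ + b • z₂) = (a : ℂ) * f z₁ + (b : ℂ) * f z₂ := by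
        rw [map_add, f.map_smul_of_tower, f.map_smul_of_tower]
        simp [Complex.real_smul]
      have hre : (f (a • z₁ + b • z₂)).re = a * (f z₁).re + b * (f z₂).re := by
        rw [hlin]
        simp [Complex.add_re, Complex.mul_re]
      have heq : a * (2 * (1 - (f z₁).re)) + b * (2 * (1 - (f z₂).re)) =
          2 * (1 - (f (a • z₁ + b • z₂)).re) := by
        rw [hre]; nlinarith
      calc Metric.infDist (a • z₁ + b • z₂) F
          ≤ a * Metric.infDist z₁ F + b * Metric.infDist z₂ F := hstep
        _ ≤ a * Real.sqrt (2 * (1 - (f z₁).re)) + b * Real.sqrt (2 * (1 - (f z₂).re)) := by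
            gcongr
        _ ≤ Real.sqrt (a * (2 * (1 - (f z₁).re)) + b * (2 * (1 - (f z₂).re))) := hcc
        _ = Real.sqrt (2 * (1 - (f (a • z₁ + b • z₂)).re)) := by rw [heq]
  -- `S` is closed
  have hSclosed : IsClosed S := by
    apply IsClosed.inter
    · exact isClosed_le (continuous_norm) continuous_const
    · apply isClosed_le (Metric.continuous_infDist_pt F)
      exact Real.continuous_sqrt.comp
        ((continuous_const.mul (continuous_const.sub
          (Complex.continuous_re.comp f.continuous))))
  -- balanced hull of `F` is contained in `S`
  have hBal : balancedHull ℂ F ⊆ S := by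
    intro z hz
    obtain ⟨r, hr, hz⟩ := mem_balancedHull_iff.mp hz
    obtain ⟨x, hx, rfl⟩ := hz
    have hfx : f x = 1 := hFval x hx
    have hfrx : f (r • x) = r := by rw [map_smul, hfx, smul_eq_mul, mul_one]
    have hnorm_rx : ‖r • x‖ = ‖r‖ := by rw [norm_smul, hx.1, mul_one]
    constructor
    · rw [hnorm_rx]; exact hr
    · have h1 : Metric.infDist (r • x) F ≤ ‖r - 1‖ := by
        calc Metric.infDist (r • x) F ≤ dist (r • x) x := Metric.infDist_le_dist_of_mem hx
        _ = ‖r • x - x‖ := dist_eq_norm _ _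
        _ = ‖(r - 1) • x‖ := by congr 1; module
        _ = ‖r - 1‖ := by rw [norm_smul, hx.1, mul_one]
      have h2 : ‖r - 1‖ ≤ Real.sqrt (2 * (1 - (f (r • x)).re)) := by
        apply Real.le_sqrt_of_sq_le
        have hsq : ‖r - 1‖ ^ 2 = (r.re - 1) ^ 2 + r.im ^ 2 := by
          rw [Complex.sq_norm, Complex.normSq_apply]
          simp [Complex.sub_re, Complex.sub_im]
          ring
        have hrle : r.re ^ 2 + r.im ^ 2 ≤ 1 := by
          have : ‖r‖ ^ 2 ≤ 1 := by nlinarith [norm_nonneg r]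
          rw [Complex.sq_norm, Complex.normSq_apply] at this
          nlinarith
        rw [hfrx, hsq]
        nlinarith
      linarith
  -- unit ball is contained in `S`
  have habs : absConvexHullOld ℂ F ⊆ S := by
    refine subset_trans (absConvexHullOld_subset' F) ?_
    exact convexHull_min hBal hSconv
  have hySmem : y ∈ S := by
    rw [hball f hf] at hymem
    exact closure_minimal habs hSclosed hymem
  -- conclude
  have hbound : Metric.infDist y F ≤ Real.sqrt (2 * (1 - (f y).re)) := hySmem.2
  have h2 : Real.sqrt (2 * (1 - (f y).re)) ≤ Real.sqrt (ε ^ 2 / 4) := by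
    apply Real.sqrt_le_sqrt
    nlinarith
  have h3 : Real.sqrt (ε ^ 2 / 4) = ε / 2 := by
    rw [show ε ^ 2 / 4 = (ε / 2) ^ 2 by ring, Real.sqrt_sq (by linarith)]
  calc Metric.infDist y F ≤ Real.sqrt (2 * (1 - (f y).re)) := hbound
    _ ≤ ε / 2 := by rw [← h3]; exact h2
    _ < ε := by linarith
end

section
/- Let X be a smooth reflexive Banach space whose dual X* is not super-reflexive (e.g., not uniformly convexifiable), and let Y = ℓ∞² (two-dimensional sup-norm space). Then the pair (X, Y) fails the Bishop-Phelps-Bollobás version of Zizler's theorem: there is no function γ : (0,1) → ℝ⁺ such that for every ε ∈ (0,1), whenever T₀ ∈ L(X,Y) with ‖T₀‖ = 1 and y₀* ∈ S_{Y*} satisfy ‖T₀*(y₀*)‖ > 1 − γ(ε), there exist T ∈ L(X,Y) with ‖T‖ = 1 and y* ∈ S_{Y*} with ‖T*(y*)‖ = 1, ‖y₀* − y*‖ < ε, ‖T₀ − T‖ < ε. -/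
open NormedSpace


open NormedSpace

lemma aux_cz {z : ℂ} {r : ℝ} (h1 : ‖z‖ ≤ r) (h2 : z.re = r) : z = (r : ℂ) := by
  have him : z.im = 0 := by
    have hn : Complex.normSq z = z.re ^ 2 + z.im ^ 2 := by
      rw [Complex.normSq_apply]; ring
    have hsq : z.re ^ 2 + z.im ^ 2 ≤ r ^ 2 := by
      nlinarith [Complex.sq_norm z, norm_nonneg z]
    rw [h2] at hsq
    have him2 : z.im ^ 2 ≤ 0 := by linarith
    have h3 : z.im ^ 2 = 0 := le_antisymm him2 (sq_nonneg z.im)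
    exact pow_eq_zero_iff (two_ne_zero) |>.mp h3
  exact Complex.ext (by simp [h2]) (by simp [him])

lemma aux_sc {X : Type*} [NormedAddCommGroup X] [NormedSpace ℂ X] [CompleteSpace X]
    (hsmooth : ∀ x : X, x ≠ 0 → ∃! f : StrongDual ℂ X, ‖f‖ = 1 ∧ f x = (‖x‖ : ℂ))
    (hrefl : Function.Surjective (NormedSpace.inclusionInDoubleDual ℂ X))
    (u v : StrongDual ℂ X) (hu : u ≠ 0) (hv : v ≠ 0) (h : ‖u + v‖ = ‖u‖ + ‖v‖) :
    ((‖u‖ : ℂ))⁻¹ • u = ((‖v‖ : ℂ))⁻¹ • v := by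
  have hun : (0:ℝ) < ‖u‖ := norm_pos_iff.mpr hu
  have hvn : (0:ℝ) < ‖v‖ := norm_pos_iff.mpr hv
  have huv : u + v ≠ 0 := by
    intro h0; rw [h0, norm_zero] at h; linarith
  obtain ⟨Φ, hΦ1, hΦ2⟩ := exists_dual_vector ℂ (u + v) (norm_ne_zero_iff.mpr huv)
  obtain ⟨x, hx⟩ := hrefl Φ
  have hxn : ‖x‖ = 1 := by
    have h1 : ‖inclusionInDoubleDual ℂ X x‖ = ‖x‖ := (inclusionInDoubleDualLi ℂ).norm_map x
    rw [hx, hΦ1] at h1; exact h1.symm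
  have hx0 : x ≠ 0 := by intro h0; rw [h0, norm_zero] at hxn; norm_num at hxn
  have happ : ∀ w : StrongDual ℂ X, Φ w = w x := by intro w; rw [← hx]; rfl
  have habs : ∀ w : StrongDual ℂ X, ‖w x‖ ≤ ‖w‖ := by
    intro w
    have := w.le_opNorm x
    rw [hxn, mul_one] at this; exact this
  have hsum : u x + v x = ((‖u‖ + ‖v‖ : ℝ) : ℂ) := by
    have h2 := hΦ2
    rw [map_add, happ, happ, h] at h2
    exact h2
  have hre : (u x).re + (v x).re = ‖u‖ + ‖v‖ := by
    have := congrArg Complex.re hsum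
    simpa using this
  have hure : (u x).re = ‖u‖ := by
    have h1 : (u x).re ≤ ‖u‖ := le_trans (Complex.re_le_norm _) (habs u)
    have h2 : (v x).re ≤ ‖v‖ := le_trans (Complex.re_le_norm _) (habs v)
    linarith
  have hvre : (v x).re = ‖v‖ := by
    have h1 : (u x).re ≤ ‖u‖ := le_trans (Complex.re_le_norm _) (habs u)
    linarith
  have hux : u x = (‖u‖ : ℂ) := aux_cz (habs u) hure
  have hvx : v x = (‖v‖ : ℂ) := aux_cz (habs v) hvre
  -- apply smoothness
  have key : ∀ w : StrongDual ℂ X, w ≠ 0 → w x = (‖w‖ : ℂ) →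
      (‖((‖w‖ : ℂ))⁻¹ • w‖ = 1 ∧ (((‖w‖ : ℂ))⁻¹ • w) x = (‖x‖ : ℂ)) := by
    intro w hw0 hwx
    have hwn : (0:ℝ) < ‖w‖ := norm_pos_iff.mpr hw0
    constructor
    · rw [norm_smul]
      simp [abs_of_pos hwn, inv_mul_cancel₀ (ne_of_gt hwn)]
    · rw [ContinuousLinearMap.smul_apply, hwx, hxn]
      simp [smul_eq_mul]
      rw [inv_mul_cancel₀]
      exact_mod_cast ne_of_gt hwn
  obtain ⟨f, hf, huniq⟩ := hsmooth x hx0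
  have h1 := huniq _ (key u hu hux)
  have h2 := huniq _ (key v hv hvx)
  rw [h1, h2]

open NormedSpace

noncomputable def opPair {X : Type*} [NormedAddCommGroup X] [NormedSpace ℂ X]
    (f g : StrongDual ℂ X) : X →L[ℂ] (Fin 2 → ℂ) :=
  ContinuousLinearMap.pi ![f, g]

lemma opPair_apply0 {X : Type*} [NormedAddCommGroup X] [NormedSpace ℂ X]
    (f g : StrongDual ℂ X) (x : X) : opPair f g x 0 = f x := rfl

lemma opPair_apply1 {X : Type*} [NormedAddCommGroup X] [NormedSpace ℂ X]
    (f g : StrongDual ℂ X) (x : X) : opPair f g x 1 = g x := rfl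

lemma pi2_norm_le {v : Fin 2 → ℂ} {r : ℝ} (h0 : ‖v 0‖ ≤ r) (h1 : ‖v 1‖ ≤ r) (hr : 0 ≤ r) :
    ‖v‖ ≤ r := by
  apply pi_norm_le_iff_of_nonneg hr |>.mpr
  intro i; fin_cases i <;> assumption

lemma opPair_norm_le {X : Type*} [NormedAddCommGroup X] [NormedSpace ℂ X]
    {f g : StrongDual ℂ X} {r : ℝ} (hf : ‖f‖ ≤ r) (hg : ‖g‖ ≤ r) (hr : 0 ≤ r) :
    ‖opPair f g‖ ≤ r := by
  apply ContinuousLinearMap.opNorm_le_bound _ hr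
  intro x
  apply pi2_norm_le
  · rw [opPair_apply0]
    exact le_trans (f.le_opNorm x) (by gcongr)
  · rw [opPair_apply1]
    exact le_trans (g.le_opNorm x) (by gcongr)
  · positivity

lemma proj_comp_norm_le {X : Type*} [NormedAddCommGroup X] [NormedSpace ℂ X]
    (T : X →L[ℂ] (Fin 2 → ℂ)) (i : Fin 2) :
    ‖(ContinuousLinearMap.proj i : (Fin 2 → ℂ) →L[ℂ] ℂ).comp T‖ ≤ ‖T‖ := by
  apply ContinuousLinearMap.opNorm_le_bound _ (norm_nonneg T)
  intro x
  calc ‖T x i‖ ≤ ‖T x‖ := norm_le_pi_norm (T x) i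
    _ ≤ ‖T‖ * ‖x‖ := T.le_opNorm x

lemma opPair_fst_ge {X : Type*} [NormedAddCommGroup X] [NormedSpace ℂ X]
    (f g : StrongDual ℂ X) : ‖f‖ ≤ ‖opPair f g‖ := by
  have : f = (ContinuousLinearMap.proj 0 : (Fin 2 → ℂ) →L[ℂ] ℂ).comp (opPair f g) := by
    ext x; rfl
  rw [this]
  exact proj_comp_norm_le _ 0

lemma opPair_snd_ge {X : Type*} [NormedAddCommGroup X] [NormedSpace ℂ X]
    (f g : StrongDual ℂ X) : ‖g‖ ≤ ‖opPair f g‖ := by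
  have : g = (ContinuousLinearMap.proj 1 : (Fin 2 → ℂ) →L[ℂ] ℂ).comp (opPair f g) := by
    ext x; rfl
  rw [this]
  exact proj_comp_norm_le _ 1

noncomputable def ySum : StrongDual ℂ (Fin 2 → ℂ) :=
  (2:ℂ)⁻¹ • ((ContinuousLinearMap.proj 0 : (Fin 2 → ℂ) →L[ℂ] ℂ)
    + (ContinuousLinearMap.proj 1 : (Fin 2 → ℂ) →L[ℂ] ℂ))

lemma ySum_apply (u : Fin 2 → ℂ) : ySum u = (2:ℂ)⁻¹ * (u 0 + u 1) := rfl

lemma ySum_norm : ‖ySum‖ = 1 := by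
  apply le_antisymm
  · apply ContinuousLinearMap.opNorm_le_bound _ zero_le_one
    intro u
    rw [ySum_apply, one_mul, norm_mul]
    have h0 : ‖u 0‖ ≤ ‖u‖ := norm_le_pi_norm u 0
    have h1 : ‖u 1‖ ≤ ‖u‖ := norm_le_pi_norm u 1
    have : ‖u 0 + u 1‖ ≤ 2 * ‖u‖ := by
      calc ‖u 0 + u 1‖ ≤ ‖u 0‖ + ‖u 1‖ := norm_add_le _ _
        _ ≤ 2 * ‖u‖ := by linarith
    have h2 : ‖(2:ℂ)⁻¹‖ = 2⁻¹ := by norm_num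
    rw [h2]
    linarith
  · have h1 : ySum (fun _ => (1:ℂ)) = 1 := by
      rw [ySum_apply]; norm_num
    have h2 : ‖(fun _ => (1:ℂ) : Fin 2 → ℂ)‖ = 1 := by
      rw [pi_norm_const]; norm_num
    have := ySum.le_opNorm (fun _ => (1:ℂ))
    rw [h1, h2, mul_one] at this
    simpa using this

lemma pi2_decomp (u : Fin 2 → ℂ) : u = u 0 • (Pi.single 0 1 : Fin 2 → ℂ) + u 1 • (Pi.single 1 1 : Fin 2 → ℂ) := by
  funext i
  fin_cases i <;> simp

lemma dual2_coeff_le (y : StrongDual ℂ (Fin 2 → ℂ)) (ha : y (Pi.single 0 1) ≠ 0)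
    (hb : y (Pi.single 1 1) ≠ 0) :
    ‖y (Pi.single 0 1)‖ + ‖y (Pi.single 1 1)‖ ≤ ‖y‖ := by
  set a := y (Pi.single 0 1)
  set b := y (Pi.single 1 1)
  set u : Fin 2 → ℂ := ![(‖a‖:ℂ)/a, (‖b‖:ℂ)/b] with hu
  have hnu : ‖u‖ ≤ 1 := by
    apply pi2_norm_le _ _ zero_le_one
    · show ‖(‖a‖:ℂ)/a‖ ≤ 1
      rw [norm_div, Complex.norm_real, norm_norm, div_self (norm_ne_zero_iff.mpr ha)]
    · show ‖(‖b‖:ℂ)/b‖ ≤ 1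
      rw [norm_div, Complex.norm_real, norm_norm, div_self (norm_ne_zero_iff.mpr hb)]
  have hyu : y u = (‖a‖:ℂ) + (‖b‖:ℂ) := by
    have := pi2_decomp u
    rw [this, map_add, map_smul, map_smul]
    show ((‖a‖:ℂ)/a) • a + ((‖b‖:ℂ)/b) • b = _
    rw [smul_eq_mul, smul_eq_mul, div_mul_cancel₀ _ ha, div_mul_cancel₀ _ hb]
  have := y.le_opNorm u
  rw [hyu] at this
  have h2 : ‖(‖a‖:ℂ) + (‖b‖:ℂ)‖ = ‖a‖ + ‖b‖ := by
    rw [← Complex.ofReal_add]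
    rw [Complex.norm_real]
    exact abs_of_nonneg (by positivity)
  rw [h2] at this
  calc ‖a‖ + ‖b‖ ≤ ‖y‖ * ‖u‖ := this
    _ ≤ ‖y‖ * 1 := mul_le_mul_of_nonneg_left hnu (norm_nonneg y)
    _ = ‖y‖ := mul_one _

lemma aux_phase {a : ℂ} {ε : ℝ} (hε0 : 0 ≤ ε) (h : ‖a - 2⁻¹‖ ≤ ε) (hε : ε ≤ 8⁻¹) :
    ‖a / (‖a‖ : ℂ) - 1‖ ≤ 6 * ε := by
  have hhalf : ‖((2:ℂ))⁻¹‖ = 2⁻¹ := by norm_num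
  have h1 : ‖(2⁻¹:ℂ)‖ - ‖a‖ ≤ ε := le_trans (le_trans (norm_sub_norm_le _ _) (by rw [norm_sub_rev])) h
  have hna : (3:ℝ)/8 ≤ ‖a‖ := by rw [hhalf] at h1; linarith
  have ha0 : a ≠ 0 := by
    intro h0; rw [h0, norm_zero] at hna; norm_num at hna
  have h2 : |(2⁻¹:ℝ) - ‖a‖| ≤ ε := by
    rw [abs_sub_comm]
    calc |‖a‖ - 2⁻¹| = |‖a‖ - ‖(2⁻¹:ℂ)‖| := by rw [hhalf]
      _ ≤ ‖a - 2⁻¹‖ := abs_norm_sub_norm_le _ _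
      _ ≤ ε := h
  have hnum : ‖a - (‖a‖:ℂ)‖ ≤ 2 * ε := by
    calc ‖a - (‖a‖:ℂ)‖ ≤ ‖a - 2⁻¹‖ + ‖(2⁻¹:ℂ) - (‖a‖:ℂ)‖ := by
          have := norm_sub_le_norm_sub_add_norm_sub a (2⁻¹:ℂ) ((‖a‖:ℂ))
          exact this
      _ ≤ ε + ε := by
          gcongr
          have : ((2⁻¹:ℂ) - (‖a‖:ℂ)) = (((2⁻¹ - ‖a‖ : ℝ)):ℂ) := by push_cast; ring
          rw [this, Complex.norm_real]
          simpa using h2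
      _ = 2 * ε := by ring
  have hc : ((‖a‖:ℝ):ℂ) ≠ 0 := by
    exact_mod_cast norm_ne_zero_iff.mpr ha0
  have heq : a / (‖a‖:ℂ) - 1 = (a - (‖a‖:ℂ)) / (‖a‖:ℂ) := by
    rw [sub_div, div_self hc]
  rw [heq, norm_div, Complex.norm_real, norm_norm]
  rw [div_le_iff₀ (by linarith)]
  nlinarith

lemma aux_eq1 {na nb nf ng : ℝ} (h : 1 ≤ na * nf + nb * ng) (hab : na + nb ≤ 1)
    (hf : nf ≤ 1) (hg : ng ≤ 1) (ha : 3/8 ≤ na) (hb : 3/8 ≤ nb) :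
    nf = 1 ∧ ng = 1 ∧ na + nb = 1 := by
  have h1 : nf = 1 := by nlinarith
  have h2 : ng = 1 := by nlinarith
  exact ⟨h1, h2, by nlinarith⟩

lemma aux_lb {a : ℂ} {ε : ℝ} (h : ‖a - 2⁻¹‖ ≤ ε) (hε : ε ≤ 8⁻¹) : (3:ℝ)/8 ≤ ‖a‖ := by
  have hhalf : ‖((2:ℂ))⁻¹‖ = 2⁻¹ := by norm_num
  have h1 : ‖(2⁻¹:ℂ)‖ - ‖a‖ ≤ ε :=
    le_trans (le_trans (norm_sub_norm_le _ _) (by rw [norm_sub_rev])) h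
  rw [hhalf] at h1; linarith

lemma aux_ne0 {a : ℂ} {ε : ℝ} (h : ‖a - 2⁻¹‖ ≤ ε) (hε : ε ≤ 8⁻¹) : a ≠ 0 := by
  intro h0
  have := aux_lb h hε
  rw [h0, norm_zero] at this; norm_num at this

set_option maxHeartbeats 2000000 in
theorem stmt14 {X : Type*} [NormedAddCommGroup X] [NormedSpace ℂ X] [CompleteSpace X]
    -- `X` is smooth: every nonzero point has a unique supporting functional
    (hsmooth : ∀ x : X, x ≠ 0 → ∃! f : StrongDual ℂ X, ‖f‖ = 1 ∧ f x = (‖x‖ : ℂ))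
    -- `X` is reflexive
    (hrefl : Function.Surjective (NormedSpace.inclusionInDoubleDual ℂ X))
    -- `X*` is not super-reflexive, i.e. not uniformly convexifiable: there is no equivalent
    -- uniformly convex norm on `X*`
    (hnotsr : ¬ ∃ N : StrongDual ℂ X → ℝ, ∃ c C : ℝ, 0 < c ∧ 0 < C ∧
      (∀ f, c * ‖f‖ ≤ N f ∧ N f ≤ C * ‖f‖) ∧
      (∀ f g, N (f + g) ≤ N f + N g) ∧ (∀ (a : ℂ) (f), N (a • f) = ‖a‖ * N f) ∧
      (∀ ε : ℝ, 0 < ε → ∃ d : ℝ, 0 < d ∧ ∀ f g, N f ≤ 1 → N g ≤ 1 → ε ≤ N (f - g) →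
        N (f + g) ≤ 2 * (1 - d))) :
    -- then the BPB version of Zizler's theorem fails for `(X, ℓ∞²)`
    ¬ ∃ γ : ℝ → ℝ, (∀ ε ∈ Set.Ioo (0 : ℝ) 1, 0 < γ ε) ∧
      ∀ ε ∈ Set.Ioo (0 : ℝ) 1, ∀ T₀ : X →L[ℂ] (Fin 2 → ℂ), ‖T₀‖ = 1 →
        ∀ y₀ : StrongDual ℂ (Fin 2 → ℂ), ‖y₀‖ = 1 → 1 - γ ε < ‖y₀.comp T₀‖ →
          ∃ (T : X →L[ℂ] (Fin 2 → ℂ)) (y : StrongDual ℂ (Fin 2 → ℂ)),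
            ‖T‖ = 1 ∧ ‖y‖ = 1 ∧ ‖y.comp T‖ = 1 ∧ ‖y₀ - y‖ < ε ∧ ‖T₀ - T‖ < ε := by
  rintro ⟨γ, hγpos, hbpb⟩
  apply hnotsr
  refine ⟨fun f => ‖f‖, 1, 1, one_pos, one_pos, fun f => ⟨by simp, by simp⟩,
    fun f g => norm_add_le f g, fun α f => norm_smul α f, ?_⟩
  intro ε hε
  set εp : ℝ := min ε 1 / 16 with hεpdef
  have hεp0 : 0 < εp := by
    have : 0 < min ε 1 := lt_min hε one_pos
    positivity
  have hεple : εp ≤ 1 / 16 := by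
    have : min ε 1 ≤ 1 := min_le_right _ _
    rw [hεpdef]; linarith
  have hεpε : εp ≤ ε / 16 := by
    have : min ε 1 ≤ ε := min_le_left _ _
    rw [hεpdef]; linarith
  have hεp8 : εp ≤ 8⁻¹ := by linarith
  have hεpIoo : εp ∈ Set.Ioo (0:ℝ) 1 := ⟨hεp0, by linarith⟩
  have hγp : 0 < γ εp := hγpos εp hεpIoo
  set d : ℝ := min (γ εp) 1 / 2 with hddef
  have hd0 : 0 < d := by
    have : 0 < min (γ εp) 1 := lt_min hγp one_pos
    positivity
  have hd1 : d ≤ 1/2 := by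
    have : min (γ εp) 1 ≤ 1 := min_le_right _ _
    rw [hddef]; linarith
  have hdγ : d < γ εp := by
    rcases le_or_gt (γ εp) 1 with h | h
    · have : min (γ εp) 1 = γ εp := min_eq_left h
      rw [hddef, this]; linarith
    · have : min (γ εp) 1 = 1 := min_eq_right h.le
      rw [hddef, this]; linarith
  refine ⟨d, hd0, ?_⟩
  intro f g hf hg hfg
  by_contra hcon
  push_neg at hcon
  -- build the operator
  set M : ℝ := ‖opPair f g‖ with hMdef
  have hM1 : M ≤ 1 := opPair_norm_le hf hg zero_le_one
  have hfM : ‖f‖ ≤ M := opPair_fst_ge f g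
  have hgM : ‖g‖ ≤ M := opPair_snd_ge f g
  have hsumM : ‖f + g‖ ≤ 2 * M := le_trans (norm_add_le f g) (by linarith)
  have hM0 : 1/2 < M := by linarith
  have hM0' : M ≠ 0 := by intro h0; rw [h0] at hM0; norm_num at hM0
  set c : ℂ := ((M:ℝ):ℂ)⁻¹ with hcdef
  have hcn : ‖c‖ = M⁻¹ := by
    rw [hcdef, norm_inv, Complex.norm_real, Real.norm_of_nonneg (by linarith)]
  set T₀ : X →L[ℂ] (Fin 2 → ℂ) := c • opPair f g with hT₀def
  have hT₀ : ‖T₀‖ = 1 := by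
    rw [hT₀def, norm_smul c (opPair f g), hcn, ← hMdef, inv_mul_cancel₀ hM0']
  have hcomp : ySum.comp T₀ = ((2:ℂ)⁻¹ * c) • (f + g) := by
    ext x
    rw [ContinuousLinearMap.comp_apply, ySum_apply, hT₀def]
    simp only [ContinuousLinearMap.smul_apply, Pi.smul_apply, opPair_apply0, opPair_apply1,
      ContinuousLinearMap.add_apply, smul_eq_mul]
    ring
  have hMinv : 1 ≤ M⁻¹ := by
    rw [le_inv_comm₀ (by norm_num) (by linarith)]
    simpa using hM1
  have hyT₀ : 1 - γ εp < ‖ySum.comp T₀‖ := by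
    rw [hcomp, norm_smul ((2:ℂ)⁻¹ * c) (f + g), norm_mul, hcn]
    have h2 : ‖(2:ℂ)⁻¹‖ = 2⁻¹ := by norm_num
    rw [h2]
    have hfg2 : 2 * (1 - d) < ‖f + g‖ := hcon
    have hd2 : (0:ℝ) < 1 - d := by linarith
    have s1 : (2:ℝ)⁻¹ * 1 * ‖f + g‖ ≤ 2⁻¹ * M⁻¹ * ‖f + g‖ :=
      mul_le_mul_of_nonneg_right (by linarith) (norm_nonneg _)
    linarith
  obtain ⟨T, y, hT, hy, hyT, hyy, hTT⟩ := hbpb εp hεpIoo T₀ hT₀ ySum ySum_norm hyT₀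
  set f' : StrongDual ℂ X := (ContinuousLinearMap.proj 0 : (Fin 2 → ℂ) →L[ℂ] ℂ).comp T with hf'def
  set g' : StrongDual ℂ X := (ContinuousLinearMap.proj 1 : (Fin 2 → ℂ) →L[ℂ] ℂ).comp T with hg'def
  set a : ℂ := y (Pi.single 0 1) with hadef
  set b : ℂ := y (Pi.single 1 1) with hbdef
  have hsingle0 : ‖(Pi.single 0 1 : Fin 2 → ℂ)‖ = 1 := by
    rw [Pi.norm_single]; norm_num
  have hsingle1 : ‖(Pi.single 1 1 : Fin 2 → ℂ)‖ = 1 := by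
    rw [Pi.norm_single]; norm_num
  have hyS0 : ySum (Pi.single 0 1) = 2⁻¹ := by
    rw [ySum_apply]
    simp [Pi.single_apply]
  have hyS1 : ySum (Pi.single 1 1) = 2⁻¹ := by
    rw [ySum_apply]
    simp [Pi.single_apply]
  have hae : ‖a - 2⁻¹‖ ≤ εp := by
    have h1 : a - 2⁻¹ = (y - ySum) (Pi.single 0 1) := by
      rw [ContinuousLinearMap.sub_apply, hyS0, hadef]
    rw [h1]
    calc ‖(y - ySum) (Pi.single 0 1)‖ ≤ ‖y - ySum‖ * ‖(Pi.single 0 1 : Fin 2 → ℂ)‖ :=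
          (y - ySum).le_opNorm _
      _ = ‖ySum - y‖ := by rw [hsingle0, mul_one, norm_sub_rev]
      _ ≤ εp := hyy.le
  have hbe : ‖b - 2⁻¹‖ ≤ εp := by
    have h1 : b - 2⁻¹ = (y - ySum) (Pi.single 1 1) := by
      rw [ContinuousLinearMap.sub_apply, hyS1, hbdef]
    rw [h1]
    calc ‖(y - ySum) (Pi.single 1 1)‖ ≤ ‖y - ySum‖ * ‖(Pi.single 1 1 : Fin 2 → ℂ)‖ :=
          (y - ySum).le_opNorm _
      _ = ‖ySum - y‖ := by rw [hsingle1, mul_one, norm_sub_rev]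
      _ ≤ εp := hyy.le
  have ha0 : a ≠ 0 := aux_ne0 hae hεp8
  have hb0 : b ≠ 0 := aux_ne0 hbe hεp8
  have ha38 : (3:ℝ)/8 ≤ ‖a‖ := aux_lb hae hεp8
  have hb38 : (3:ℝ)/8 ≤ ‖b‖ := aux_lb hbe hεp8
  have hab1 : ‖a‖ + ‖b‖ ≤ 1 := by
    have := dual2_coeff_le y ha0 hb0
    rw [hy] at this
    exact this
  have hf'le : ‖f'‖ ≤ 1 := by
    rw [← hT]; exact proj_comp_norm_le T 0
  have hg'le : ‖g'‖ ≤ 1 := by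
    rw [← hT]; exact proj_comp_norm_le T 1
  have hdecomp : y.comp T = a • f' + b • g' := by
    ext x
    show y (T x) = _
    conv_lhs => rw [pi2_decomp (T x)]
    rw [map_add, map_smul, map_smul]
    show T x 0 • a + T x 1 • b = a • (T x 0) + b • (T x 1)
    simp [smul_eq_mul]; ring
  have h1 : ‖a • f' + b • g'‖ = 1 := by rw [← hdecomp]; exact hyT
  have hle : 1 ≤ ‖a‖ * ‖f'‖ + ‖b‖ * ‖g'‖ := by
    calc (1:ℝ) = ‖a • f' + b • g'‖ := h1.symm
      _ ≤ ‖a • f'‖ + ‖b • g'‖ := norm_add_le _ _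
      _ = ‖a‖ * ‖f'‖ + ‖b‖ * ‖g'‖ := by rw [norm_smul a f', norm_smul b g']
  obtain ⟨hf'1, hg'1, habs1⟩ := aux_eq1 hle hab1 hf'le hg'le ha38 hb38
  have hnaf : ‖a • f'‖ = ‖a‖ := by rw [norm_smul a f', hf'1, mul_one]
  have hnbg : ‖b • g'‖ = ‖b‖ := by rw [norm_smul b g', hg'1, mul_one]
  have hf'0 : f' ≠ 0 := by
    intro h0; rw [h0, norm_zero] at hf'1; norm_num at hf'1
  have hg'0 : g' ≠ 0 := by
    intro h0; rw [h0, norm_zero] at hg'1; norm_num at hg'1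
  have hsc := aux_sc hsmooth hrefl (a • f') (b • g') (smul_ne_zero ha0 hf'0)
    (smul_ne_zero hb0 hg'0) (by rw [h1, hnaf, hnbg, habs1])
  rw [hnaf, hnbg] at hsc
  have hsc' : (a / (‖a‖:ℂ)) • f' = (b / (‖b‖:ℂ)) • g' := by
    rw [div_eq_inv_mul, div_eq_inv_mul, ← smul_smul, ← smul_smul]
    exact hsc
  set α : ℂ := a / (‖a‖:ℂ) with hαdef
  set β : ℂ := b / (‖b‖:ℂ) with hβdef
  have hαn : ‖α‖ = 1 := by
    rw [hαdef, norm_div, Complex.norm_real, norm_norm, div_self (norm_ne_zero_iff.mpr ha0)]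
  have hkey : α • (f' - g') = (β - α) • g' := by
    rw [smul_sub, hsc']
    ext x
    simp only [ContinuousLinearMap.sub_apply, ContinuousLinearMap.smul_apply, smul_eq_mul]
    ring
  have hf'g' : ‖f' - g'‖ ≤ 12 * εp := by
    have h2 : ‖f' - g'‖ = ‖α • (f' - g')‖ := by rw [norm_smul α (f' - g'), hαn, one_mul]
    rw [h2, hkey, norm_smul (β - α) g', hg'1, mul_one]
    have hp1 : ‖α - 1‖ ≤ 6 * εp := aux_phase hεp0.le hae hεp8
    have hp2 : ‖β - 1‖ ≤ 6 * εp := aux_phase hεp0.le hbe hεp8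
    calc ‖β - α‖ = ‖(β - 1) + (1 - α)‖ := by ring_nf
      _ ≤ ‖β - 1‖ + ‖1 - α‖ := norm_add_le _ _
      _ = ‖β - 1‖ + ‖α - 1‖ := by rw [norm_sub_rev (1:ℂ)]
      _ ≤ 12 * εp := by linarith
  -- component estimates
  have hcf : (ContinuousLinearMap.proj 0 : (Fin 2 → ℂ) →L[ℂ] ℂ).comp T₀ = c • f := by
    ext x; rfl
  have hcg : (ContinuousLinearMap.proj 1 : (Fin 2 → ℂ) →L[ℂ] ℂ).comp T₀ = c • g := by
    ext x; rfl
  have hfc : ‖c • f - f'‖ < εp := by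
    have h2 : c • f - f' = (ContinuousLinearMap.proj 0 : (Fin 2 → ℂ) →L[ℂ] ℂ).comp (T₀ - T) := by
      rw [ContinuousLinearMap.comp_sub, hcf, hf'def]
    rw [h2]
    exact lt_of_le_of_lt (proj_comp_norm_le _ 0) hTT
  have hgc : ‖c • g - g'‖ < εp := by
    have h2 : c • g - g' = (ContinuousLinearMap.proj 1 : (Fin 2 → ℂ) →L[ℂ] ℂ).comp (T₀ - T) := by
      rw [ContinuousLinearMap.comp_sub, hcg, hg'def]
    rw [h2]
    exact lt_of_le_of_lt (proj_comp_norm_le _ 1) hTT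
  -- conclude
  have hMC0 : ((M:ℝ):ℂ) ≠ 0 := by exact_mod_cast hM0'
  have hfg14 : ‖f - g‖ < 14 * εp := by
    have hsplit : ‖c • f - c • g‖ < 14 * εp := by
      calc ‖c • f - c • g‖ = ‖(c • f - f') + ((f' - g') + (g' - c • g))‖ := by
            congr 1; abel
        _ ≤ ‖c • f - f'‖ + ‖(f' - g') + (g' - c • g)‖ := norm_add_le _ _
        _ ≤ ‖c • f - f'‖ + (‖f' - g'‖ + ‖g' - c • g‖) := by
            gcongr; exact norm_add_le _ _
        _ = ‖c • f - f'‖ + ‖f' - g'‖ + ‖c • g - g'‖ := by rw [norm_sub_rev g']; ring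
        _ < εp + 12 * εp + εp := by
            apply add_lt_add (add_lt_add_of_lt_of_le hfc hf'g') hgc
        _ = 14 * εp := by ring
    have hrescale : f - g = ((M:ℝ):ℂ) • (c • f - c • g) := by
      rw [smul_sub, smul_smul, smul_smul, hcdef, mul_inv_cancel₀ hMC0, one_smul, one_smul]
    rw [hrescale, norm_smul ((M:ℝ):ℂ) (c • f - c • g), Complex.norm_real,
      Real.norm_of_nonneg (by linarith)]
    have hb1 : M * ‖c • f - c • g‖ ≤ ‖c • f - c • g‖ :=
      mul_le_of_le_one_left (norm_nonneg _) hM1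
    linarith
  linarith
end
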